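/- arXiv:0906.4609 — 2 statements merged into one kernel-verified Lean document; each statement's English description precedes it below -/
import Mathlib

section
/- If G is a finite König–Egerváry graph, then the critical difference of G satisfies d(G) = |core(G)| − |N(core(G))|, where core(G) is the intersection of all maximum independent sets of G. -/
/-! Write `surplus X = |X| - |N(X)|`. For a maximum matching `M` and any vertex set `X`,
the covered vertices outside `X` lie in `Xᶜ`, and the partners of the covered vertices in `X` lie
in `N(X)`; hence `2μ ≤ |Xᶜ| + |N(X)|`, i.e. `surplus X ≤ |V| - 2μ`. A maximum independent set `S`
has `N(S) = Sᶜ`, so in a König–Egerváry graph `surplus S = 2α - |V| = |V| - 2μ` attains this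
bound. Since `surplus` is supermodular, the sets attaining the bound are closed under
intersection, so the core attains it too; being independent, it realizes `d(G)`. -/

namespace KEPaper

open SimpleGraph

variable {V : Type*}

/-- `nbhd G S` is the set of vertices having a neighbor in `S`. -/
def nbhd (G : SimpleGraph V) (S : Set V) : Set V := {v | ∃ w ∈ S, G.Adj v w}

/-- `S` is an independent set of `G`: no two vertices of `S` are adjacent. -/
def IsIndep (G : SimpleGraph V) (S : Set V) : Prop :=
  S.Pairwise fun u v => ¬ G.Adj u v

/-- The independence number `α(G)`: maximum cardinality of an independent set. -/
noncomputable def indepNum (G : SimpleGraph V) : ℕ :=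
  sSup {n | ∃ S : Set V, IsIndep G S ∧ S.ncard = n}

/-- The matching number `μ(G)`: maximum cardinality of a matching. -/
noncomputable def matchNum (G : SimpleGraph V) : ℕ :=
  sSup {n | ∃ M : Subgraph G, M.IsMatching ∧ M.edgeSet.ncard = n}

/-- `S` is a maximum independent set of `G`. -/
def IsMaxIndep (G : SimpleGraph V) (S : Set V) : Prop :=
  IsIndep G S ∧ S.ncard = indepNum G

/-- The critical difference `d(G) = max {|S| - |N(S)| : S independent}`. -/
noncomputable def critDiff (G : SimpleGraph V) : ℤ :=
  sSup {d : ℤ | ∃ S : Set V, IsIndep G S ∧ d = (S.ncard : ℤ) - ((nbhd G S).ncard : ℤ)}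

/-- `S` is a critical independent set: independent with `|S| - |N(S)| = d(G)`. -/
def IsCritIndep (G : SimpleGraph V) (S : Set V) : Prop :=
  IsIndep G S ∧ (S.ncard : ℤ) - ((nbhd G S).ncard : ℤ) = critDiff G

/-- `core G` is the intersection of all maximum independent sets of `G`. -/
def core (G : SimpleGraph V) : Set V := ⋂ S ∈ {S : Set V | IsMaxIndep G S}, S

/-- `G` is a König–Egerváry graph: `|V(G)| = α(G) + μ(G)`. -/
def KoenigEgervary (G : SimpleGraph V) : Prop :=
  Nat.card V = indepNum G + matchNum G

/-- `A` is a local maximum independent set of `G`: it is a maximum independent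
set of the subgraph of `G` induced by `N[A] = A ∪ N(A)`. -/
def IsLocalMaxIndep (G : SimpleGraph V) (A : Set V) : Prop :=
  IsMaxIndep (G.induce (A ∪ nbhd G A)) {x : ↥(A ∪ nbhd G A) | ↑x ∈ A}

def IsSupermodular {α : Type*} [Lattice α] (f : α → ℤ) : Prop :=
  ∀ a b, f a + f b ≤ f (a ⊓ b) + f (a ⊔ b)

namespace IsSupermodular

variable {α : Type*} {f : α → ℤ} {m : ℤ}

theorem map_inf_eq [Lattice α] (hf : IsSupermodular f) (hle : ∀ a, f a ≤ m) {a b : α}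
    (ha : f a = m) (hb : f b = m) : f (a ⊓ b) = m := by
  have := hf a b
  have := hle (a ⊓ b)
  have := hle (a ⊔ b)
  omega

theorem map_inf_sInf_eq [CompleteLattice α] (hf : IsSupermodular f) (hle : ∀ a, f a ≤ m)
    {a : α} (ha : f a = m) {s : Set α} (hs : s.Finite) (hm : ∀ b ∈ s, f b = m) :
    f (a ⊓ sInf s) = m := by
  induction s, hs using Set.Finite.induction_on with
  | empty => simpa using ha
  | @insert b s _ _ ih =>
    rw [sInf_insert, inf_left_comm]
    exact hf.map_inf_eq hle (hm b (Set.mem_insert b s))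
      (ih fun c hc => hm c (Set.mem_insert_of_mem b hc))

end IsSupermodular

theorem nbhd_union (G : SimpleGraph V) (A B : Set V) :
    nbhd G (A ∪ B) = nbhd G A ∪ nbhd G B := by
  ext v
  simp only [nbhd, Set.mem_ofPred_eq, Set.mem_union, or_and_right, exists_or]

theorem nbhd_inter_subset (G : SimpleGraph V) (A B : Set V) :
    nbhd G (A ∩ B) ⊆ nbhd G A ∩ nbhd G B :=
  fun _ ⟨w, ⟨hwA, hwB⟩, hadj⟩ => ⟨⟨w, hwA, hadj⟩, ⟨w, hwB, hadj⟩⟩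

noncomputable def surplus (G : SimpleGraph V) (X : Set V) : ℤ := X.ncard - (nbhd G X).ncard

section Finite

variable [Finite V]

theorem isSupermodular_surplus (G : SimpleGraph V) : IsSupermodular (surplus G) := by
  intro A B
  have hc := Set.ncard_union_add_ncard_inter A B
  have hn := Set.ncard_union_add_ncard_inter (nbhd G A) (nbhd G B)
  have hinter := Set.ncard_le_ncard (nbhd_inter_subset G A B)
  simp only [surplus, Set.inf_eq_inter, Set.sup_eq_union, nbhd_union] at *
  omega

theorem _root_.SimpleGraph.Subgraph.IsMatching.ncard_verts {G : SimpleGraph V}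
    {M : G.Subgraph} (h : M.IsMatching) : M.verts.ncard = 2 * M.edgeSet.ncard := by
  have := Fintype.ofFinite M.edgeSet
  have hfiber : ∀ e : M.edgeSet, Nat.card {v // h.toEdge v = e} = 2 := by
    rintro ⟨e, he⟩
    induction e using Sym2.ind with | _ u w => ?_
    have hadj : M.Adj u w := he
    change Nat.card (h.toEdge ⁻¹' {⟨s(u, w), hadj⟩}) = 2
    rw [h.toEdge_preimage_singleton hadj, Nat.card_coe_set_eq, Set.ncard_pair]
    exact fun huw => hadj.ne (congrArg Subtype.val huw)
  rw [← Nat.card_coe_set_eq, ← Nat.card_congr (Equiv.sigmaFiberEquiv h.toEdge), Nat.card_sigma]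
  simp [hfiber, mul_comm]

theorem _root_.SimpleGraph.Subgraph.IsMatching.ncard_verts_inter_le {G : SimpleGraph V}
    {M : G.Subgraph} (h : M.IsMatching) (X : Set V) :
    (M.verts ∩ X).ncard ≤ (nbhd G X).ncard := by
  choose! p hp using fun v (hv : v ∈ M.verts) => (h hv).exists
  refine Set.ncard_le_ncard_of_injOn p (fun v hv => ⟨v, hv.2, (hp v hv.1).adj_sub.symm⟩) ?_
  intro a ha b hb hab
  exact h.eq_of_adj_right (hp a ha.1) (hab ▸ hp b hb.1)

theorem _root_.SimpleGraph.Subgraph.IsMatching.two_mul_ncard_edgeSet_le {G : SimpleGraph V}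
    {M : G.Subgraph} (h : M.IsMatching) (X : Set V) :
    2 * M.edgeSet.ncard ≤ Xᶜ.ncard + (nbhd G X).ncard := by
  rw [← h.ncard_verts, ← Set.ncard_inter_add_ncard_sdiff_eq_ncard M.verts X, add_comm]
  exact add_le_add (Set.ncard_le_ncard fun _ hv => hv.2) (h.ncard_verts_inter_le X)

theorem exists_isMatching_ncard_eq_matchNum (G : SimpleGraph V) :
    ∃ M : G.Subgraph, M.IsMatching ∧ M.edgeSet.ncard = matchNum G := by
  have hne : {n | ∃ M : G.Subgraph, M.IsMatching ∧ M.edgeSet.ncard = n}.Nonempty :=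
    ⟨0, ⊥, fun _ hv => hv.elim, by simp⟩
  exact Nat.sSup_mem hne ⟨Nat.card (Sym2 V), fun _ ⟨M, _, hM⟩ => hM ▸ Set.ncard_le_card _⟩

theorem surplus_le (G : SimpleGraph V) (X : Set V) :
    surplus G X ≤ Nat.card V - 2 * matchNum G := by
  obtain ⟨M, hM, hcard⟩ := exists_isMatching_ncard_eq_matchNum G
  have hmatch := hM.two_mul_ncard_edgeSet_le X
  have hsplit := Set.ncard_add_ncard_compl X
  rw [surplus]
  omega

theorem bddAbove_indep_ncard (G : SimpleGraph V) :
    BddAbove {n | ∃ S : Set V, IsIndep G S ∧ S.ncard = n} :=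
  ⟨Nat.card V, fun _ ⟨S, _, hS⟩ => hS ▸ Set.ncard_le_card S⟩

theorem exists_isMaxIndep (G : SimpleGraph V) : ∃ S, IsMaxIndep G S := by
  have hne : {n | ∃ S : Set V, IsIndep G S ∧ S.ncard = n}.Nonempty :=
    ⟨0, ∅, Set.pairwise_empty _, Set.ncard_empty V⟩
  exact Nat.sSup_mem hne (bddAbove_indep_ncard G)

theorem IsIndep.ncard_le_indepNum {G : SimpleGraph V} {S : Set V} (hS : IsIndep G S) :
    S.ncard ≤ indepNum G :=
  le_csSup (bddAbove_indep_ncard G) ⟨S, hS, rfl⟩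

/-- A vertex outside `S ∪ N(S)` could be added to `S`. -/
theorem IsMaxIndep.nbhd_eq_compl {G : SimpleGraph V} {S : Set V} (hS : IsMaxIndep G S) :
    nbhd G S = Sᶜ := by
  refine Set.Subset.antisymm (fun v ⟨w, hw, hadj⟩ hv => hS.1 hv hw hadj.ne hadj) fun v hv => ?_
  by_contra hvS
  have hins : IsIndep G (insert v S) := by
    refine hS.1.insert fun w hw _ =>
      ⟨fun hadj => hvS ⟨w, hw, hadj⟩, fun hadj => hvS ⟨w, hw, hadj.symm⟩⟩
  have := hins.ncard_le_indepNum
  rw [Set.ncard_insert_of_notMem hv, hS.2] at this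
  omega

theorem KoenigEgervary.surplus_eq {G : SimpleGraph V} (hG : KoenigEgervary G) {S : Set V}
    (hS : IsMaxIndep G S) : surplus G S = Nat.card V - 2 * matchNum G := by
  have hsplit := Set.ncard_add_ncard_compl S
  have hcard : S.ncard = indepNum G := hS.2
  have hKE : Nat.card V = indepNum G + matchNum G := hG
  rw [surplus, hS.nbhd_eq_compl]
  omega

theorem isIndep_core (G : SimpleGraph V) : IsIndep G (core G) := by
  obtain ⟨S, hS⟩ := exists_isMaxIndep G
  exact hS.1.mono (Set.biInter_subset_of_mem (show S ∈ {S | IsMaxIndep G S} from hS))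

theorem KoenigEgervary.surplus_core {G : SimpleGraph V} (hG : KoenigEgervary G) :
    surplus G (core G) = Nat.card V - 2 * matchNum G := by
  obtain ⟨S, hS⟩ := exists_isMaxIndep G
  have hcore : core G = S ⊓ sInf {S : Set V | IsMaxIndep G S} := by
    rw [core, ← Set.sInter_eq_biInter]
    exact (inf_eq_right.mpr (sInf_le (show S ∈ {S | IsMaxIndep G S} from hS))).symm
  rw [hcore]
  exact (isSupermodular_surplus G).map_inf_sInf_eq (surplus_le G) (hG.surplus_eq hS)
    (Set.toFinite _) fun _ => hG.surplus_eq

end Finite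

/-- If `G` is a finite König–Egerváry graph, then
`d(G) = |core(G)| - |N(core(G))|`. -/
theorem critDiff_eq_core_sub_nbhd_core [Finite V] (G : SimpleGraph V)
    (hG : KoenigEgervary G) :
    critDiff G = ((core G).ncard : ℤ) - ((nbhd G (core G)).ncard : ℤ) := by
  refine IsGreatest.csSup_eq ⟨⟨core G, isIndep_core G, rfl⟩, ?_⟩
  rintro _ ⟨S, -, rfl⟩
  exact (surplus_le G S).trans_eq hG.surplus_core.symm

end KEPaper
end

section
/- If S is a critical independent set of a finite simple graph G, then there exists a matching of G that matches every vertex of N(S) to a vertex of S. -/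
/-!
Delete from a critical independent set `S` all neighbours of some `A ⊆ N(S)`: the rest `T` is
still independent and `N(T) ⊆ N(S) \ A`, so the maximality of `|S| - |N(S)|` forces
`|A| ≤ |N(A) ∩ S|`. This is Hall's condition for the bipartite graph of `G`-edges between `N(S)`
and `S`, and Hall's theorem yields the matching.
-/

namespace KEPaper

open SimpleGraph

variable {V : Type*}

section

variable {G : SimpleGraph V} {s t A S T : Set V}

lemma IsIndep.mono (hT : IsIndep G T) (h : S ⊆ T) : IsIndep G S :=
  Set.Pairwise.mono h hT

lemma IsIndep.disjoint_nbhd (hS : IsIndep G S) : Disjoint (nbhd G S) S :=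
  Set.disjoint_left.2 fun _ ⟨_, hwS, hvw⟩ hvS => hS hvS hwS hvw.ne hvw

lemma ncard_sub_ncard_nbhd_le_critDiff [Finite V] (hT : IsIndep G T) :
    (T.ncard : ℤ) - (nbhd G T).ncard ≤ critDiff G := by
  refine le_csSup ⟨Nat.card V, ?_⟩ ⟨T, hT, rfl⟩
  rintro _ ⟨T, -, rfl⟩
  have : T.ncard ≤ Nat.card V := Set.ncard_le_card T
  omega

lemma nbhd_sdiff_nbhd_subset : nbhd G (S \ nbhd G A) ⊆ nbhd G S \ A :=
  fun _ ⟨w, ⟨hwS, hwA⟩, hvw⟩ =>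
    ⟨⟨w, hwS, hvw⟩, fun hvA => hwA ⟨_, hvA, hvw.symm⟩⟩

theorem IsCritIndep.ncard_le_ncard_inter_nbhd [Finite V] (hS : IsCritIndep G S)
    (hA : A ⊆ nbhd G S) : A.ncard ≤ (S ∩ nbhd G A).ncard := by
  have hcrit := ncard_sub_ncard_nbhd_le_critDiff (hS.1.mono (Set.sdiff_subset (t := nbhd G A)))
  rw [← hS.2] at hcrit
  have hT := Set.ncard_inter_add_ncard_sdiff_eq_ncard S (nbhd G A)
  have hNT : (nbhd G (S \ nbhd G A)).ncard ≤ (nbhd G S \ A).ncard :=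
    Set.ncard_le_ncard nbhd_sdiff_nbhd_subset
  have hNS := Set.ncard_sdiff_add_ncard_of_subset hA
  omega

theorem exists_isMatching_of_forall_ncard_le_inter_nbhd [Finite V] (hst : Disjoint s t)
    (hall : ∀ A ⊆ s, A.ncard ≤ (t ∩ nbhd G A).ncard) :
    ∃ M : Subgraph G, M.IsMatching ∧ ∀ v ∈ s, ∃ w ∈ t, M.Adj v w := by
  classical
  have := Fintype.ofFinite V
  have hbip := between_isBipartiteWith (G := G) hst
  obtain ⟨M, hsM, hM⟩ := exists_isMatching_of_forall_ncard_le hbip fun A hA => by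
    refine (hall A hA).trans (Set.ncard_le_ncard ?_)
    rintro w ⟨hwt, v, hvA, hwv⟩
    exact Set.mem_biUnion hvA ⟨hwv.symm, .inl ⟨hA hvA, hwt⟩⟩
  refine ⟨M.map (Hom.ofLE between_le), hM.map_ofLE between_le, fun v hv => ?_⟩
  obtain ⟨w, hvw, -⟩ := hM (hsM hv)
  have hwt : w ∈ t := by
    rcases (M.adj_sub hvw).2 with ⟨-, hwt⟩ | ⟨hvt, -⟩
    · exact hwt
    · exact absurd hvt (Set.disjoint_left.1 hst hv)
  exact ⟨w, hwt, v, w, hvw, rfl, rfl⟩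

end

/-- If `S` is a critical independent set of a finite simple graph `G`, then
there is a matching of `G` matching every vertex of `N(S)` to a vertex of `S`. -/
theorem matching_from_nbhd_of_critIndep [Finite V] (G : SimpleGraph V) (S : Set V)
    (hS : IsCritIndep G S) :
    ∃ M : Subgraph G, M.IsMatching ∧ ∀ v ∈ nbhd G S, ∃ w ∈ S, M.Adj v w :=
  exists_isMatching_of_forall_ncard_le_inter_nbhd hS.1.disjoint_nbhd
    fun _ hA => hS.ncard_le_ncard_inter_nbhd hA

end KEPaper
end
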